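/- arXiv:2208.01921 — 2 statements merged into one kernel-verified Lean document; each statement's English description precedes it below -/
import Mathlib

section
/- Let D be a discriminant form of type 2_{II}^{εn} with n even. Then dim C[D]^{SL_2(Z)} = (2^{n−1} + 1)/3 + ε·2^{(n−2)/2}, where invariants are with respect to the Weil representation. -/
open scoped Classical

/-- `e(x) = exp(2πix)`; it only depends on `x` modulo 1. -/
noncomputable def e (x : ℚ) : ℂ := Complex.exp (2 * Real.pi * Complex.I * (x : ℂ))

/-- A discriminant form structure on a finite abelian group `D`: a function
`q : D → ℚ` representing a quadratic form `D → ℚ/ℤ` (all identities hold modulo 1)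
whose associated bilinear form `b(β,γ) = q(β+γ) - q(β) - q(γ) mod 1` is
nondegenerate. -/
structure IsDiscForm (D : Type*) [AddCommGroup D] [Fintype D] (q : D → ℚ) : Prop where
  quad : ∀ (n : ℤ) (γ : D), ∃ k : ℤ, q (n • γ) - (n : ℚ) ^ 2 * q γ = (k : ℚ)
  bilin : ∀ α β γ : D, ∃ k : ℤ,
    (q (α + β + γ) - q (α + β) - q γ) - (q (α + γ) - q α - q γ)
      - (q (β + γ) - q β - q γ) = (k : ℚ)
  nondeg : ∀ γ : D, (∀ β : D, ∃ k : ℤ, q (γ + β) - q γ - q β = (k : ℚ)) → γ = 0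

/-- The action of `T` in the Weil representation on `ℂ[D]`. -/
noncomputable def rhoT (D : Type) [AddCommGroup D] [Fintype D] (q : D → ℚ) :
    (D → ℂ) →ₗ[ℂ] (D → ℂ) :=
  LinearMap.pi fun γ => e (-(q γ)) • LinearMap.proj γ

/-- The action of `S` in the Weil representation on `ℂ[D]`, where `σ = e(sign(D)/8)`. -/
noncomputable def rhoS (D : Type) [AddCommGroup D] [Fintype D] (q : D → ℚ) (σ : ℂ) :
    (D → ℂ) →ₗ[ℂ] (D → ℂ) :=
  LinearMap.pi fun γ =>
    ∑ β : D, ((σ / (Real.sqrt (Fintype.card D) : ℂ)) * e (q (γ + β) - q γ - q β)) •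
      LinearMap.proj β

/-- The subspace of `SL₂(ℤ)`-invariants of the Weil representation, i.e. the vectors
fixed by the generators `S` and `T` of `SL₂(ℤ)`. -/
noncomputable def weilInvariants (D : Type) [AddCommGroup D] [Fintype D]
    (q : D → ℚ) (σ : ℂ) : Submodule ℂ (D → ℂ) :=
  LinearMap.ker (rhoT D q - LinearMap.id) ⊓ LinearMap.ker (rhoS D q σ - LinearMap.id)

set_option linter.unusedSectionVars false

lemma e_add (x y : ℚ) : e (x + y) = e x * e y := by
  unfold e; rw [← Complex.exp_add]; push_cast; ring_nf

lemma e_zero : e 0 = 1 := by simp [e]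

lemma e_int (n : ℤ) : e n = 1 := by
  unfold e
  rw [show ((2:ℂ) * Real.pi * Complex.I * ((n:ℚ):ℂ)) = (n:ℤ) * (2 * Real.pi * Complex.I) by
    push_cast; ring]
  exact Complex.exp_int_mul_two_pi_mul_I n

lemma e_half : e (1/2) = -1 := by
  unfold e
  rw [show ((2:ℂ) * Real.pi * Complex.I * (((1:ℚ)/2:ℚ):ℂ)) = Real.pi * Complex.I by
    push_cast; ring]
  exact Complex.exp_pi_mul_I

lemma e_ne_zero (x : ℚ) : e x ≠ 0 := Complex.exp_ne_zero _

lemma e_neg (x : ℚ) : e (-x) = (e x)⁻¹ := by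
  have h := e_add x (-x)
  rw [add_neg_cancel, e_zero] at h
  field_simp [e_ne_zero x] at h ⊢
  linear_combination -h

lemma e_nat_mul (n : ℕ) (x : ℚ) : e (n * x) = e x ^ n := by
  induction n with
  | zero => simp [e_zero]
  | succ k ih => push_cast; rw [add_mul, one_mul, e_add, ih, pow_succ]

lemma e_half_nat (n : ℕ) : e (n / 2) = (-1) ^ n := by
  rw [show (n:ℚ)/2 = n * (1/2) by ring, e_nat_mul, e_half]

lemma e_one : e 1 = 1 := by simpa using e_int 1

lemma e_three_half : e (3/2) = -1 := by
  have := e_half_nat 3; norm_num at this; simpa using this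

noncomputable def chi (x : ZMod 2) : ℂ := (-1) ^ x.val

lemma zmod2_cases : ∀ a : ZMod 2, a = 0 ∨ a = 1 := by decide

lemma chi_zero : chi 0 = 1 := by norm_num [chi, ZMod.val_zero]
lemma chi_one : chi 1 = -1 := by norm_num [chi, ZMod.val_one]

lemma chi_add (a b : ZMod 2) : chi (a + b) = chi a * chi b := by
  rcases zmod2_cases a with ha | ha <;> rcases zmod2_cases b with hb | hb <;>
    subst ha hb <;>
    simp [chi_zero, chi_one, show (1 + 1 : ZMod 2) = 0 from by decide]

lemma chi_sum {ι : Type*} (t : Finset ι) (f : ι → ZMod 2) :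
    chi (∑ i ∈ t, f i) = ∏ i ∈ t, chi (f i) := by
  induction t using Finset.cons_induction with
  | empty => simp [chi_zero]
  | cons a t ha ih => rw [Finset.sum_cons, Finset.prod_cons, chi_add, ih]

def qA (a : ZMod 2 × ZMod 2) : ℚ := ((a.1.val * a.2.val : ℕ) : ℚ) / 2
def qB (a : ZMod 2 × ZMod 2) : ℚ :=
  ((a.1.val ^ 2 + a.1.val * a.2.val + a.2.val ^ 2 : ℕ) : ℚ) / 2

lemma cocycleA (a b : ZMod 2 × ZMod 2) :
    e (qA (a + b)) = e (qA a) * e (qA b) * chi (a.1 * b.2 + a.2 * b.1) := by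
  obtain ⟨a1, a2⟩ := a; obtain ⟨b1, b2⟩ := b
  rcases zmod2_cases a1 with h | h <;> subst h <;>
  rcases zmod2_cases a2 with h | h <;> subst h <;>
  rcases zmod2_cases b1 with h | h <;> subst h <;>
  rcases zmod2_cases b2 with h | h <;> subst h <;>
  · simp only [Prod.mk_add_mk, show (1+1:ZMod 2)=0 from by decide,
      show (1*1:ZMod 2)=1 from by decide, show (1*0:ZMod 2)=0 from by decide,
      show (0*1:ZMod 2)=0 from by decide, show (0*0:ZMod 2)=0 from by decide,
      zero_add, add_zero, mul_zero, zero_mul, mul_one, one_mul]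
    norm_num [qA, chi_zero, chi_one, ZMod.val_zero, ZMod.val_one, e_zero, e_half, e_one,
      e_three_half]

lemma cocycleB (a b : ZMod 2 × ZMod 2) :
    e (qB (a + b)) = e (qB a) * e (qB b) * chi (a.1 * b.2 + a.2 * b.1) := by
  obtain ⟨a1, a2⟩ := a; obtain ⟨b1, b2⟩ := b
  rcases zmod2_cases a1 with h | h <;> subst h <;>
  rcases zmod2_cases a2 with h | h <;> subst h <;>
  rcases zmod2_cases b1 with h | h <;> subst h <;>
  rcases zmod2_cases b2 with h | h <;> subst h <;>
  · simp only [Prod.mk_add_mk, show (1+1:ZMod 2)=0 from by decide,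
      show (1*1:ZMod 2)=1 from by decide, show (1*0:ZMod 2)=0 from by decide,
      show (0*1:ZMod 2)=0 from by decide, show (0*0:ZMod 2)=0 from by decide,
      zero_add, add_zero, mul_zero, zero_mul, mul_one, one_mul]
    norm_num [qB, chi_zero, chi_one, ZMod.val_zero, ZMod.val_one, e_zero, e_half, e_one,
      e_three_half]

lemma e_sum {ι : Type*} (t : Finset ι) (f : ι → ℚ) :
    e (∑ i ∈ t, f i) = ∏ i ∈ t, e (f i) := by
  induction t using Finset.cons_induction with
  | empty => simp [e_zero]
  | cons a t ha ih => rw [Finset.sum_cons, Finset.prod_cons, e_add, ih]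

abbrev D2 (m : ℕ) : Type := Fin m → ZMod 2 × ZMod 2

def Bz {m : ℕ} (γ β : D2 m) : ZMod 2 :=
  ∑ i, ((γ i).1 * (β i).2 + (γ i).2 * (β i).1)

lemma Bz_symm {m : ℕ} (γ β : D2 m) : Bz γ β = Bz β γ := by
  unfold Bz; apply Finset.sum_congr rfl; intro i _; ring

lemma Bz_add_right {m : ℕ} (β γ α : D2 m) : Bz β (γ + α) = Bz β γ + Bz β α := by
  unfold Bz
  rw [← Finset.sum_add_distrib]
  apply Finset.sum_congr rfl; intro i _
  simp only [Pi.add_apply, Prod.fst_add, Prod.snd_add]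
  ring

lemma Bz_self {m : ℕ} (γ : D2 m) : Bz γ γ = 0 := by
  unfold Bz
  apply Finset.sum_eq_zero; intro i _
  rw [mul_comm (γ i).2 (γ i).1]
  exact CharTwo.add_self_eq_zero _

lemma sum_zmod2 {M : Type*} [AddCommMonoid M] (g : ZMod 2 → M) :
    ∑ x : ZMod 2, g x = g 0 + g 1 := by
  rw [show (Finset.univ : Finset (ZMod 2)) = {0, 1} from by decide]
  rw [Finset.sum_pair (by decide : (0 : ZMod 2) ≠ 1)]

lemma sum_zmod22 {M : Type*} [AddCommMonoid M] (f : ZMod 2 × ZMod 2 → M) :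
    ∑ a : ZMod 2 × ZMod 2, f a = f (0,0) + f (0,1) + f (1,0) + f (1,1) := by
  rw [Fintype.sum_prod_type, sum_zmod2 (fun x => ∑ y : ZMod 2, f (x, y)),
    sum_zmod2 (fun y => f (0, y)), sum_zmod2 (fun y => f (1, y))]
  abel

lemma orth_loc (c : ZMod 2 × ZMod 2) :
    ∑ b : ZMod 2 × ZMod 2, chi (b.1 * c.2 + b.2 * c.1)
      = if c = 0 then (4 : ℂ) else 0 := by
  obtain ⟨c1, c2⟩ := c
  rcases zmod2_cases c1 with h | h <;> subst h <;>
  rcases zmod2_cases c2 with h | h <;> subst h <;>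
  · rw [sum_zmod22 (fun b => chi (b.1 * _ + b.2 * _))]
    simp only [mul_one, mul_zero, one_mul, zero_mul, add_zero, zero_add,
      show (1+1:ZMod 2) = 0 from by decide]
    norm_num [chi_zero, chi_one, Prod.ext_iff, show ((0:ZMod 2) ≠ 1) from by decide,
      show (1:ZMod 2) ≠ 0 from by decide]

lemma orth {m : ℕ} (δ : D2 m) :
    ∑ β : D2 m, chi (Bz β δ) = if δ = 0 then (4:ℂ)^m else 0 := by
  have h1 : ∀ β : D2 m, chi (Bz β δ)
      = ∏ i, chi ((β i).1 * (δ i).2 + (β i).2 * (δ i).1) := fun β => chi_sum _ _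
  simp_rw [h1]
  rw [← Fintype.prod_sum (fun i (b : ZMod 2 × ZMod 2) =>
    chi (b.1 * (δ i).2 + b.2 * (δ i).1))]
  have h2 : ∀ i : Fin m, (∑ b : ZMod 2 × ZMod 2, chi (b.1 * (δ i).2 + b.2 * (δ i).1))
      = if δ i = 0 then (4:ℂ) else 0 := fun i => orth_loc (δ i)
  simp_rw [h2]
  by_cases hδ : δ = 0
  · subst hδ; simp
  · have : ∃ i, δ i ≠ 0 := by
      by_contra h
      push_neg at h
      exact hδ (funext h)
    obtain ⟨i, hi⟩ := this
    rw [if_neg hδ]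
    exact Finset.prod_eq_zero (Finset.mem_univ i) (if_neg hi)

lemma two_torsion {m : ℕ} (x : D2 m) : x + x = 0 := by
  funext i
  rw [Pi.add_apply, Prod.ext_iff]
  exact ⟨CharTwo.add_self_eq_zero _, CharTwo.add_self_eq_zero _⟩

lemma add_eq_zero_iff_eq {m : ℕ} (γ α : D2 m) : γ + α = 0 ↔ γ = α := by
  constructor
  · intro h
    have := congrArg (· + α) h
    simp only [zero_add] at this
    rw [add_assoc, two_torsion, add_zero] at this
    exact this
  · intro h; subst h; exact two_torsion γ

section Main

variable {m : ℕ} (s : Fin m → ℤ) (q : D2 m → ℚ) (σ : ℂ)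

def Qif (i : Fin m) (a : ZMod 2 × ZMod 2) : ℚ := if s i = 1 then qA a else qB a

lemma hq_Qif (hq : ∀ x : D2 m, q x = ∑ i, (if s i = 1
        then (((x i).1.val * (x i).2.val : ℕ) : ℚ) / 2
        else ((((x i).1.val) ^ 2 + (x i).1.val * (x i).2.val + ((x i).2.val) ^ 2 : ℕ) : ℚ) / 2)) :
    ∀ x : D2 m, q x = ∑ i, Qif s i (x i) := by
  intro x
  rw [hq x]
  apply Finset.sum_congr rfl
  intro i _
  by_cases h : s i = 1 <;> simp [Qif, qA, qB, h]

lemma Qif_cocycle (hs : ∀ i, s i = 1 ∨ s i = -1) (i : Fin m) (a b : ZMod 2 × ZMod 2) :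
    e (Qif s i (a + b)) = e (Qif s i a) * e (Qif s i b) * chi (a.1 * b.2 + a.2 * b.1) := by
  rcases hs i with h | h
  · simp only [Qif, if_pos h]; exact cocycleA a b
  · have h1 : s i ≠ 1 := by rw [h]; decide
    simp only [Qif, if_neg h1]; exact cocycleB a b

variable (hs : ∀ i, s i = 1 ∨ s i = -1)
  (hq : ∀ x : D2 m, q x = ∑ i, (if s i = 1
        then (((x i).1.val * (x i).2.val : ℕ) : ℚ) / 2
        else ((((x i).1.val) ^ 2 + (x i).1.val * (x i).2.val + ((x i).2.val) ^ 2 : ℕ) : ℚ) / 2))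

include hs hq

lemma q_cocycle (γ β : D2 m) :
    e (q (γ + β)) = e (q γ) * e (q β) * chi (Bz γ β) := by
  rw [hq_Qif s q hq, hq_Qif s q hq, hq_Qif s q hq]
  simp only [Pi.add_apply]
  rw [e_sum, e_sum, e_sum, Bz, chi_sum, ← Finset.prod_mul_distrib, ← Finset.prod_mul_distrib]
  apply Finset.prod_congr rfl
  intro i _
  exact Qif_cocycle s hs i (γ i) (β i)

lemma q_sq (γ : D2 m) : e (q γ) * e (q γ) = 1 := by
  have h : ∀ i : Fin m, ∃ n : ℕ, 2 * Qif s i (γ i) = n := by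
    intro i
    rcases hs i with h | h
    · exact ⟨((γ i).1.val * (γ i).2.val : ℕ), by simp [Qif, if_pos h, qA]; ring⟩
    · have h1 : s i ≠ 1 := by rw [h]; decide
      exact ⟨((γ i).1.val ^ 2 + (γ i).1.val * (γ i).2.val + (γ i).2.val ^ 2 : ℕ),
        by simp [Qif, if_neg h1, qB]; ring⟩
  choose N hN using h
  have h2 : q γ + q γ = ((∑ i, N i : ℕ) : ℚ) := by
    rw [hq_Qif s q hq]
    push_cast
    rw [← Finset.sum_add_distrib]
    apply Finset.sum_congr rfl; intro i _
    have := hN i; linarith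
  rw [← e_add, h2]
  have : (((∑ i, N i : ℕ) : ℚ)) = (((∑ i, N i : ℕ) : ℤ) : ℚ) := by push_cast; ring
  rw [this]
  exact e_int _

lemma q_eneg (γ : D2 m) : e (-(q γ)) = e (q γ) := by
  rw [e_neg]
  exact inv_eq_of_mul_eq_one_right (q_sq s q hs hq γ)

lemma q_bil (γ β : D2 m) : e (q (γ + β) - q γ - q β) = chi (Bz γ β) := by
  rw [show q (γ + β) - q γ - q β = q (γ + β) + (-(q γ)) + (-(q β)) by ring]
  rw [e_add, e_add, q_eneg s q hs hq, q_eneg s q hs hq, q_cocycle s q hs hq]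
  rw [show e (q γ) * e (q β) * chi (Bz γ β) * e (q γ) * e (q β)
    = (e (q γ) * e (q γ)) * ((e (q β) * e (q β)) * chi (Bz γ β)) by ring,
    q_sq s q hs hq, q_sq s q hs hq, one_mul, one_mul]

lemma sum_e_q : ∑ γ : D2 m, e (q γ) = 2^m * ((∏ i, s i : ℤ) : ℂ) := by
  have h1 : ∀ γ : D2 m, e (q γ) = ∏ i, e (Qif s i (γ i)) := by
    intro γ; rw [hq_Qif s q hq, e_sum]
  simp_rw [h1]
  rw [← Fintype.prod_sum (fun i (a : ZMod 2 × ZMod 2) => e (Qif s i a))]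
  have h2 : ∀ i : Fin m, (∑ a : ZMod 2 × ZMod 2, e (Qif s i a)) = 2 * ((s i : ℤ) : ℂ) := by
    intro i
    rcases hs i with h | h
    · have e1 : ∀ a, Qif s i a = qA a := fun a => if_pos h
      simp_rw [e1, h]
      rw [sum_zmod22 (fun a => e (qA a))]
      norm_num [qA, ZMod.val_zero, ZMod.val_one, e_zero, e_half]
    · have h1 : s i ≠ 1 := by rw [h]; decide
      have e1 : ∀ a, Qif s i a = qB a := fun a => if_neg h1
      simp_rw [e1, h]
      rw [sum_zmod22 (fun a => e (qB a))]
      norm_num [qB, ZMod.val_zero, ZMod.val_one, e_zero, e_half, e_three_half]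
  simp_rw [h2]
  rw [Finset.prod_mul_distrib, Finset.prod_const]
  push_cast
  simp

noncomputable def MT {m : ℕ} (q : D2 m → ℚ) : Matrix (D2 m) (D2 m) ℂ :=
  Matrix.diagonal fun γ => e (-(q γ))

noncomputable def MS {m : ℕ} (σ : ℂ) : Matrix (D2 m) (D2 m) ℂ :=
  Matrix.of fun γ β => σ / 2 ^ m * chi (Bz γ β)

lemma MT_sq : MT q * MT q = 1 := by
  have h : ∀ γ : D2 m, e (-(q γ)) * e (-(q γ)) = 1 := fun γ => by
    rw [q_eneg s q hs hq]; exact q_sq s q hs hq γ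
  unfold MT
  rw [Matrix.diagonal_mul_diagonal,
    show (fun γ : D2 m => e (-(q γ)) * e (-(q γ))) = (fun _ => (1:ℂ)) from funext h]
  exact Matrix.diagonal_one

lemma MS_sq (hσ2 : σ * σ = 1) : MS σ * MS (m := m) σ = 1 := by
  ext γ α
  rw [Matrix.mul_apply]
  have h1 : ∀ β : D2 m, MS σ γ β * MS σ β α
      = (σ / 2 ^ m) * (σ / 2 ^ m) * chi (Bz β (γ + α)) := by
    intro β
    simp only [MS, Matrix.of_apply]
    rw [Bz_symm γ β, Bz_add_right, chi_add]; ring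
  rw [Finset.sum_congr rfl (fun β _ => h1 β), ← Finset.mul_sum, orth]
  by_cases hγα : γ = α
  · subst hγα
    rw [if_pos ((add_eq_zero_iff_eq γ γ).mpr rfl), Matrix.one_apply_eq]
    have h2 : (2:ℂ)^m ≠ 0 := pow_ne_zero _ two_ne_zero
    have h4 : (4:ℂ)^m = 2^m * 2^m := by rw [← mul_pow]; norm_num
    rw [show σ / 2 ^ m * (σ / 2 ^ m) * (4:ℂ)^m = (σ * σ) * ((2^m * 2^m) / (2^m * 2^m)) by
      rw [h4]; ring, hσ2, div_self (mul_ne_zero h2 h2), mul_one]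
  · rw [if_neg (fun h => hγα ((add_eq_zero_iff_eq γ α).mp h)),
      Matrix.one_apply_ne hγα, mul_zero]

lemma gauss (hG : ∑ γ : D2 m, e (q γ) = (2:ℂ)^m * σ) (δ : D2 m) :
    ∑ β : D2 m, e (-(q β)) * chi (Bz β δ) = e (q δ) * ((2:ℂ)^m * σ) := by
  have h1 : ∀ β : D2 m, e (-(q β)) * chi (Bz β δ) = e (q (β + δ)) * e (q δ) := by
    intro β
    have hb : chi (Bz β δ) = e (q (β + δ)) * e (q β) * e (q δ) := by
      rw [q_cocycle s q hs hq β δ,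
        show e (q β) * e (q δ) * chi (Bz β δ) * e (q β) * e (q δ)
          = (e (q β) * e (q β)) * ((e (q δ) * e (q δ)) * chi (Bz β δ)) by ring,
        q_sq s q hs hq, q_sq s q hs hq, one_mul, one_mul]
    rw [q_eneg s q hs hq, hb,
      show e (q β) * (e (q (β + δ)) * e (q β) * e (q δ))
        = (e (q β) * e (q β)) * (e (q (β + δ)) * e (q δ)) by ring,
      q_sq s q hs hq, one_mul]
  rw [Finset.sum_congr rfl (fun β _ => h1 β), ← Finset.sum_mul,
    show (∑ β : D2 m, e (q (β + δ))) = ∑ γ : D2 m, e (q γ) from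
      Equiv.sum_comp (Equiv.addRight δ) (fun γ => e (q γ)), hG]
  ring

lemma MSTS (hσ2 : σ * σ = 1) (hG : ∑ γ : D2 m, e (q γ) = (2:ℂ)^m * σ) :
    MS σ * MT q * MS σ = MT q * MS σ * MT q := by
  ext γ α
  have hL : (MS (m := m) σ * MT q * MS σ : Matrix (D2 m) (D2 m) ℂ) γ α
      = (σ / 2 ^ m) * (σ / 2 ^ m) * (e (q (γ + α)) * ((2:ℂ)^m * σ)) := by
    rw [Matrix.mul_apply]
    have h1 : ∀ β : D2 m, (MS (m := m) σ * MT q : Matrix (D2 m) (D2 m) ℂ) γ β * MS σ β α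
        = (σ / 2 ^ m) * (σ / 2 ^ m) * (e (-(q β)) * chi (Bz β (γ + α))) := by
      intro β
      rw [show MS σ * MT q = MS σ * Matrix.diagonal (fun γ => e (-(q γ))) from rfl,
        Matrix.mul_diagonal]
      simp only [MS, Matrix.of_apply]
      rw [Bz_symm γ β, Bz_add_right, chi_add]; ring
    rw [Finset.sum_congr rfl (fun β _ => h1 β), ← Finset.mul_sum,
      gauss s q σ hs hq hG]
  have hR : (MT q * MS (m := m) σ * MT q : Matrix (D2 m) (D2 m) ℂ) γ α = (σ / 2 ^ m) * e (q (γ + α)) := by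
    rw [show MT q * MS σ * MT q = Matrix.diagonal (fun γ => e (-(q γ))) * MS σ
        * Matrix.diagonal (fun γ => e (-(q γ))) from rfl,
      Matrix.mul_diagonal, Matrix.diagonal_mul]
    simp only [MS, Matrix.of_apply]
    rw [q_eneg s q hs hq, q_eneg s q hs hq, q_cocycle s q hs hq]
    ring
  rw [hL, hR]
  have h2 : (2:ℂ)^m ≠ 0 := pow_ne_zero _ two_ne_zero
  field_simp
  linear_combination (σ * e (q (γ + α))) * hσ2

end Main

lemma card_D2 (m : ℕ) : Fintype.card (D2 m) = 4 ^ m := by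
  rw [Fintype.card_fun]
  simp [ZMod.card]

lemma sqrt_card (m : ℕ) : ((Real.sqrt (Fintype.card (D2 m)) : ℝ) : ℂ) = (2:ℂ) ^ m := by
  have h : ((Fintype.card (D2 m) : ℝ)) = ((2:ℝ)^m)^2 := by
    rw [card_D2]; push_cast
    rw [← pow_mul, show m * 2 = 2 * m from mul_comm m 2, pow_mul]
    norm_num
  rw [h, Real.sqrt_sq (by positivity)]
  push_cast; ring

section Main2

variable {m : ℕ} (s : Fin m → ℤ) (q : D2 m → ℚ) (σ : ℂ)
  (hs : ∀ i, s i = 1 ∨ s i = -1)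
  (hq : ∀ x : D2 m, q x = ∑ i, (if s i = 1
        then (((x i).1.val * (x i).2.val : ℕ) : ℚ) / 2
        else ((((x i).1.val) ^ 2 + (x i).1.val * (x i).2.val + ((x i).2.val) ^ 2 : ℕ) : ℚ) / 2))

include hs hq

lemma rhoT_eq : rhoT (D2 m) q = Matrix.toLin' (MT q) := by
  apply LinearMap.ext; intro x; funext γ
  simp [rhoT, MT, Matrix.toLin'_apply, Matrix.mulVec_diagonal]

lemma rhoS_eq : rhoS (D2 m) q σ = Matrix.toLin' (MS σ) := by
  apply LinearMap.ext; intro x; funext γ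
  have h1 : ∀ β : D2 m, ((σ / (Real.sqrt (Fintype.card (D2 m)) : ℂ)) * e (q (γ + β) - q γ - q β))
      = σ / 2 ^ m * chi (Bz γ β) := by
    intro β
    rw [sqrt_card, q_bil s q hs hq]
  simp only [rhoS, LinearMap.pi_apply, LinearMap.sum_apply, LinearMap.smul_apply,
    LinearMap.proj_apply, smul_eq_mul, Matrix.toLin'_apply, Matrix.mulVec, dotProduct,
    MS, Matrix.of_apply]
  exact Finset.sum_congr rfl fun β _ => by rw [h1 β]

end Main2


/-- dimension of the space of Weil invariants for a discriminant form of
type `2_{II}^{εn}`, `n = 2m` even: an orthogonal sum of `m` hyperbolic (`s i = 1`,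
`q(x,y) = xy/2`) or anti-hyperbolic (`s i = -1`, `q(x,y) = (x²+xy+y²)/2`) planes over
`ℤ/2ℤ`, with `ε = ∏ s i`. -/
theorem dim_weil_invariants_even_two_adic
    (m : ℕ) (s : Fin m → ℤ) (hs : ∀ i, s i = 1 ∨ s i = -1)
    (q : (Fin m → ZMod 2 × ZMod 2) → ℚ)
    (hq : ∀ x, q x = ∑ i, (if s i = 1
        then (((x i).1.val * (x i).2.val : ℕ) : ℚ) / 2
        else ((((x i).1.val) ^ 2 + (x i).1.val * (x i).2.val + ((x i).2.val) ^ 2 : ℕ) : ℚ) / 2))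
    (σ : ℂ)
    (hMilgram : ∑ γ : Fin m → ZMod 2 × ZMod 2, e (q γ)
      = (Real.sqrt (Fintype.card (Fin m → ZMod 2 × ZMod 2)) : ℂ) * σ) :
    (Module.finrank ℂ ↥(weilInvariants (Fin m → ZMod 2 × ZMod 2) q σ) : ℚ)
      = ((2 : ℚ) ^ ((2 * m : ℤ) - 1) + 1) / 3
        + ((∏ i, s i : ℤ) : ℚ) * (2 : ℚ) ^ ((m : ℤ) - 1) := by
  have h2m : (2:ℂ)^m ≠ 0 := pow_ne_zero _ two_ne_zero
  have hG : ∑ γ : D2 m, e (q γ) = (2:ℂ)^m * σ := by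
    rw [hMilgram, sqrt_card]
  have hεs : ∑ γ : D2 m, e (q γ) = 2^m * ((∏ i, s i : ℤ) : ℂ) := sum_e_q s q hs hq
  have hσ : σ = ((∏ i, s i : ℤ) : ℂ) := mul_left_cancel₀ h2m (hG.symm.trans hεs)
  have hε2 : ((∏ i, s i : ℤ) : ℂ) * ((∏ i, s i : ℤ) : ℂ) = 1 := by
    have h : (∏ i, s i) * (∏ i, s i) = 1 := by
      rw [← Finset.prod_mul_distrib]
      rw [Finset.prod_congr rfl (fun i _ => show s i * s i = 1 by
        rcases hs i with h | h <;> rw [h] <;> norm_num)]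
      exact Finset.prod_const_one
    exact_mod_cast congrArg (fun z : ℤ => (z : ℂ)) h
  have hσ2 : σ * σ = 1 := by rw [hσ]; exact hε2
  -- matrix relations
  have hT2 : MT q * MT q = 1 := MT_sq s q hs hq
  have hS2 : MS σ * MS (m := m) σ = 1 := MS_sq s q σ hs hq hσ2
  have hSTS : MS σ * MT q * MS σ = MT q * MS σ * MT q := MSTS s q σ hs hq hσ2 hG
  have hT2' : ∀ X : Matrix (D2 m) (D2 m) ℂ, X * MT q * MT q = X := fun X => by
    rw [mul_assoc, hT2, mul_one]
  set Q : Matrix (D2 m) (D2 m) ℂ :=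
    1 + MS σ + MT q + MS σ * MT q + MT q * MS σ + MT q * MS σ * MT q with hQ
  set P : Matrix (D2 m) (D2 m) ℂ := (6:ℂ)⁻¹ • Q with hP
  have hTP : MT q * P = P := by
    rw [hP, Matrix.mul_smul]
    congr 1
    rw [hQ]
    simp only [mul_add, mul_one, ← mul_assoc, hT2, one_mul]
    abel
  have hSP : MS σ * P = P := by
    rw [hP, Matrix.mul_smul]
    congr 1
    rw [hQ]
    simp only [mul_add, mul_one, ← mul_assoc, hS2, one_mul, hSTS, hT2']
    abel
  -- linear maps
  have hrT : rhoT (D2 m) q = Matrix.toLin' (MT q) := rhoT_eq s q hs hq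
  have hrS : rhoS (D2 m) q σ = Matrix.toLin' (MS σ) := rhoS_eq s q σ hs hq
  have hproj : LinearMap.IsProj (weilInvariants (D2 m) q σ) (Matrix.toLin' P) := by
    constructor
    · intro x
      refine Submodule.mem_inf.mpr ⟨?_, ?_⟩ <;>
        rw [LinearMap.mem_ker, LinearMap.sub_apply, LinearMap.id_apply, sub_eq_zero]
      · rw [hrT, ← Matrix.toLin'_mul_apply, hTP]
      · rw [hrS, ← Matrix.toLin'_mul_apply, hSP]
    · intro x hx
      obtain ⟨hx1, hx2⟩ := Submodule.mem_inf.mp hx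
      have hTx : Matrix.toLin' (MT q) x = x := by
        have h := LinearMap.mem_ker.mp hx1
        rw [LinearMap.sub_apply, LinearMap.id_apply, sub_eq_zero, hrT] at h
        exact h
      have hSx : Matrix.toLin' (MS σ) x = x := by
        have h := LinearMap.mem_ker.mp hx2
        rw [LinearMap.sub_apply, LinearMap.id_apply, sub_eq_zero, hrS] at h
        exact h
      rw [hP, hQ]
      simp only [map_smul, map_add, Matrix.toLin'_one, Matrix.toLin'_mul,
        LinearMap.smul_apply, LinearMap.add_apply, LinearMap.comp_apply,
        LinearMap.id_apply, hTx, hSx]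
      module
  -- traces
  have htrMT : Matrix.trace (MT q) = 2^m * σ := by
    rw [MT, Matrix.trace_diagonal,
      Finset.sum_congr rfl (fun γ _ => q_eneg s q hs hq γ), hG]
  have hMSdiag : ∀ γ : D2 m, MS (m := m) σ γ γ = σ / 2^m := by
    intro γ
    simp only [MS, Matrix.of_apply, Bz_self, chi_zero, mul_one]
  have h4m : (4:ℂ)^m = 2^m * 2^m := by rw [← mul_pow]; norm_num
  have htrMS : Matrix.trace (MS (m := m) σ) = 2^m * σ := by
    rw [Matrix.trace]
    simp only [Matrix.diag_apply]
    rw [Finset.sum_congr rfl (fun γ _ => hMSdiag γ), Finset.sum_const, Finset.card_univ,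
      card_D2, nsmul_eq_mul]
    push_cast
    rw [h4m]
    field_simp
  have htrST : Matrix.trace (MS σ * MT q) = 1 := by
    rw [Matrix.trace]
    have h1 : ∀ γ : D2 m, (MS σ * MT q : Matrix (D2 m) (D2 m) ℂ).diag γ
        = σ / 2^m * e (q γ) := by
      intro γ
      rw [Matrix.diag_apply, show MS σ * MT q = MS σ * Matrix.diagonal (fun γ => e (-(q γ)))
        from rfl, Matrix.mul_diagonal, hMSdiag, q_eneg s q hs hq]
    rw [Finset.sum_congr rfl (fun γ _ => h1 γ), ← Finset.mul_sum, hG]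
    field_simp
    linear_combination hσ2
  have htrTS : Matrix.trace (MT q * MS σ) = 1 := by
    rw [Matrix.trace]
    have h1 : ∀ γ : D2 m, (MT q * MS σ : Matrix (D2 m) (D2 m) ℂ).diag γ
        = σ / 2^m * e (q γ) := by
      intro γ
      rw [Matrix.diag_apply, show MT q * MS σ = Matrix.diagonal (fun γ => e (-(q γ))) * MS σ
        from rfl, Matrix.diagonal_mul, hMSdiag, q_eneg s q hs hq]
      ring
    rw [Finset.sum_congr rfl (fun γ _ => h1 γ), ← Finset.mul_sum, hG]
    field_simp
    linear_combination hσ2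
  have htrTST : Matrix.trace (MT q * MS σ * MT q) = 2^m * σ := by
    rw [Matrix.trace]
    have h1 : ∀ γ : D2 m, (MT q * MS σ * MT q : Matrix (D2 m) (D2 m) ℂ).diag γ
        = σ / 2^m := by
      intro γ
      rw [Matrix.diag_apply, show MT q * MS σ * MT q
          = Matrix.diagonal (fun γ => e (-(q γ))) * MS σ * Matrix.diagonal (fun γ => e (-(q γ)))
        from rfl, Matrix.mul_diagonal, Matrix.diagonal_mul, hMSdiag]
      have h2 := q_eneg s q hs hq γ
      have h3 := q_sq s q hs hq γ
      rw [h2, show e (q γ) * (σ / 2^m) * e (q γ) = (e (q γ) * e (q γ)) * (σ / 2^m) by ring,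
        h3, one_mul]
    rw [Finset.sum_congr rfl (fun γ _ => h1 γ), Finset.sum_const, Finset.card_univ,
      card_D2, nsmul_eq_mul]
    push_cast
    rw [h4m]
    field_simp
  have htrP : Matrix.trace P = ((4:ℂ)^m + 3 * 2^m * σ + 2) / 6 := by
    rw [hP, hQ, Matrix.trace_smul]
    simp only [Matrix.trace_add]
    rw [Matrix.trace_one, card_D2, htrMT, htrMS, htrST, htrTS, htrTST]
    push_cast
    field_simp
    ring
  -- finrank
  have hfree : Module.Free ℂ ↥(weilInvariants (D2 m) q σ) := inferInstance
  have hfin : (Module.finrank ℂ ↥(weilInvariants (D2 m) q σ) : ℂ)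
      = ((4:ℂ)^m + 3 * 2^m * σ + 2) / 6 := by
    rw [← hproj.trace, LinearMap.trace_eq_matrix_trace ℂ (Pi.basisFun ℂ (D2 m)),
      LinearMap.toMatrix_eq_toMatrix', LinearMap.toMatrix'_toLin', htrP]
  -- final arithmetic
  set ε : ℤ := ∏ i, s i with hε
  have hQfin : (Module.finrank ℂ ↥(weilInvariants (D2 m) q σ) : ℚ)
      = ((4:ℚ)^m + 3 * 2^m * (ε:ℚ) + 2) / 6 := by
    have hC : ((((4:ℚ)^m + 3 * 2^m * (ε:ℚ) + 2) / 6 : ℚ) : ℂ)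
        = ((4:ℂ)^m + 3 * 2^m * σ + 2) / 6 := by
      rw [hσ]
      push_cast
      try ring
    have := hfin.trans hC.symm
    exact_mod_cast this
  rw [hQfin]
  have h1 : (2:ℚ)^((2 * m : ℤ) - 1) = (4:ℚ)^m / 2 := by
    rw [zpow_sub₀ (by norm_num : (2:ℚ) ≠ 0), zpow_one,
      show (2 * (m:ℤ)) = ((2 * m : ℕ) : ℤ) by push_cast; ring, zpow_natCast, pow_mul]
    norm_num
  have h2 : (2:ℚ)^((m : ℤ) - 1) = (2:ℚ)^m / 2 := by
    rw [zpow_sub₀ (by norm_num : (2:ℚ) ≠ 0), zpow_one, zpow_natCast]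
  rw [h1, h2]
  ring
end

section
/- Let D be a discriminant form of even signature and H an isotropic subgroup. The isotropic lift ↑_H^D: C[H^⊥/H] → C[D], defined by ↑_H^D(e^{γ+H}) = Σ_{μ∈H} e^{γ+μ} for γ ∈ H^⊥, intertwines the Weil representations: ↑_H^D ∘ ρ_{H^⊥/H}(M) = ρ_D(M) ∘ ↑_H^D for all M ∈ SL_2(Z). In particular ↑_H^D maps invariants to invariants. -/
open scoped Classical

/-- The orthogonal complement `H^⊥` of a subgroup `H` of a discriminant form `(D, q)`:
the elements pairing integrally with every element of `H`. -/
def perpSet (D : Type*) [AddCommGroup D] (q : D → ℚ) (H : AddSubgroup D) : Set D :=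
  {γ | ∀ h ∈ H, ∃ k : ℤ, q (γ + h) - q γ - q h = (k : ℚ)}

lemma e_eq_one_iff {x : ℚ} : e x = 1 ↔ ∃ k : ℤ, x = k := by
  have h2πI : (2 * Real.pi * Complex.I : ℂ) ≠ 0 := by simp [Real.pi_ne_zero]
  simp only [e, Complex.exp_eq_one_iff, mul_comm _ (2 * Real.pi * Complex.I : ℂ),
    mul_right_inj' h2πI]
  exact exists_congr fun k => by exact_mod_cast Iff.rfl

lemma e_intCast (k : ℤ) : e k = 1 :=
  e_eq_one_iff.2 ⟨k, rfl⟩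

def polar {D : Type*} [AddCommGroup D] (q : D → ℚ) (γ β : D) : ℚ :=
  q (γ + β) - q γ - q β

section

variable {D : Type*} [AddCommGroup D] [Fintype D] {q : D → ℚ}

lemma IsDiscForm.polar_add_right (hD : IsDiscForm D q) (γ β h : D) :
    ∃ k : ℤ, polar q γ (β + h) = polar q γ β + polar q γ h + k := by
  obtain ⟨k, hk⟩ := hD.bilin β h γ
  refine ⟨k, ?_⟩
  simp only [polar, add_comm γ]
  linarith

lemma IsDiscForm.e_polar_add_right (hD : IsDiscForm D q) (γ β h : D) :
    e (polar q γ (β + h)) = e (polar q γ h) * e (polar q γ β) := by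
  obtain ⟨k, hk⟩ := hD.polar_add_right γ β h
  rw [hk, e_add, e_add, e_intCast, mul_one, mul_comm]

lemma IsDiscForm.sum_e_polar_mul_eq_zero (hD : IsDiscForm D q) {w : D → ℂ} {γ h : D}
    (hper : ∀ β, w (β + h) = w β) (hγh : ∀ k : ℤ, polar q γ h ≠ k) :
    ∑ β, e (polar q γ β) * w β = 0 := by
  set S := ∑ β, e (polar q γ β) * w β
  have hshift : e (polar q γ h) * S = S := by
    calc e (polar q γ h) * S
        = ∑ β, e (polar q γ (β + h)) * w (β + h) := by
          simp only [S, Finset.mul_sum, hD.e_polar_add_right, hper, mul_assoc]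
      _ = S := Fintype.sum_equiv (Equiv.addRight h) _ _ fun _ => rfl
  by_contra hS
  obtain ⟨k, hk⟩ := e_eq_one_iff.1 ((mul_eq_right₀ hS).1 hshift)
  exact hγh k hk

end

lemma div_sqrt_div_sq_mul_inv (σ : ℂ) {d n : ℝ} (hd : 0 ≤ d) (hn : 0 < n) :
    (σ / (Real.sqrt (d / n ^ 2) : ℂ)) * (n : ℂ)⁻¹ = σ / (Real.sqrt d : ℂ) := by
  rw [Real.sqrt_div hd, Real.sqrt_sq hn.le, Complex.ofReal_div, div_div_eq_mul_div,
    mul_div_right_comm, mul_inv_cancel_right₀ (by exact_mod_cast hn.ne')]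

theorem isotropic_lift_intertwines_general
    (D : Type) [AddCommGroup D] [Fintype D] (q : D → ℚ) (hD : IsDiscForm D q)
    (σ : ℂ)
    (H : AddSubgroup D)
    (w : D → ℂ)
    (hsupp : ∀ γ : D, γ ∉ perpSet D q H → w γ = 0)
    (hper : ∀ γ : D, ∀ h ∈ H, w (γ + h) = w γ) :
    (∀ γ : D,
      (if γ ∈ perpSet D q H then e (-(q γ)) * w γ else 0) = e (-(q γ)) * w γ)
    ∧ (∀ γ : D,
      (if γ ∈ perpSet D q H then
        (σ / (Real.sqrt ((Fintype.card D : ℝ) / (Nat.card H : ℝ) ^ 2) : ℂ)) *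
          ((Nat.card H : ℂ)⁻¹ *
            ∑ β : D, (if β ∈ perpSet D q H then e (q (γ + β) - q γ - q β) * w β else 0))
       else 0)
      = (σ / (Real.sqrt (Fintype.card D) : ℂ)) *
          ∑ β : D, e (q (γ + β) - q γ - q β) * w β) := by
  have hrestrict : ∀ f : D → ℂ,
      ∑ β : D, (if β ∈ perpSet D q H then f β * w β else 0) = ∑ β : D, f β * w β :=
    fun f => Fintype.sum_congr _ _ fun β => by
      by_cases hβ : β ∈ perpSet D q H
      · rw [if_pos hβ]
      · rw [if_neg hβ, hsupp β hβ, mul_zero]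
  refine ⟨fun γ => ?_, fun γ => ?_⟩
  · by_cases hγ : γ ∈ perpSet D q H
    · rw [if_pos hγ]
    · rw [if_neg hγ, hsupp γ hγ, mul_zero]
  by_cases hγ : γ ∈ perpSet D q H
  · rw [if_pos hγ, hrestrict, ← mul_assoc, ← Complex.ofReal_natCast (Nat.card H),
      div_sqrt_div_sq_mul_inv σ (Nat.cast_nonneg _) (Nat.cast_pos.2 Nat.card_pos)]
  · obtain ⟨h, hh, hγh⟩ : ∃ h ∈ H, ∀ k : ℤ, polar q γ h ≠ k := by
      simpa [perpSet, polar] using hγ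
    rw [if_neg hγ]
    exact (mul_eq_zero_of_right _ (hD.sum_e_polar_mul_eq_zero (fun β => hper β h hh) hγh)).symm

/-- the isotropic lift `↑_H^D : ℂ[H^⊥/H] → ℂ[D]` intertwines the Weil
representations of `H^⊥/H` and `D` (it suffices to check this on the generators `T`
and `S` of `SL₂(ℤ)`).  An element of `ℂ[H^⊥/H]` is encoded by an `H`-periodic
function `w` on `D` supported on `H^⊥` (its coefficient on the coset `γ + H` being
`w γ`); under this encoding `↑_H^D(w̄) = Σ_{γ+H} w(γ) Σ_{μ∈H} e^{γ+μ}` is the function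
`γ ↦ if γ ∈ H^⊥ then w γ else 0`, the Weil representation of `H^⊥/H` uses the same
`σ = e(sign(D)/8)` (same signature), `|H^⊥/H| = |D|/|H|²`, and the sum over `H^⊥/H`
is `(1/|H|)` times the sum over `H^⊥`. -/
theorem isotropic_lift_intertwines
    (D : Type) [AddCommGroup D] [Fintype D] (q : D → ℚ) (hD : IsDiscForm D q)
    (σ : ℂ)
    (hMilgram : ∑ γ : D, e (q γ) = (Real.sqrt (Fintype.card D) : ℂ) * σ)
    (hEvenSig : σ ^ 4 = 1)
    (H : AddSubgroup D) (hH : ∀ h ∈ H, ∃ k : ℤ, q h = (k : ℚ))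
    (w : D → ℂ)
    (hsupp : ∀ γ : D, γ ∉ perpSet D q H → w γ = 0)
    (hper : ∀ γ : D, ∀ h ∈ H, w (γ + h) = w γ) :
    (∀ γ : D,
      (if γ ∈ perpSet D q H then e (-(q γ)) * w γ else 0) = e (-(q γ)) * w γ)
    ∧ (∀ γ : D,
      (if γ ∈ perpSet D q H then
        (σ / (Real.sqrt ((Fintype.card D : ℝ) / (Nat.card H : ℝ) ^ 2) : ℂ)) *
          ((Nat.card H : ℂ)⁻¹ *
            ∑ β : D, (if β ∈ perpSet D q H then e (q (γ + β) - q γ - q β) * w β else 0))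
       else 0)
      = (σ / (Real.sqrt (Fintype.card D) : ℂ)) *
          ∑ β : D, e (q (γ + β) - q γ - q β) * w β) :=
  isotropic_lift_intertwines_general D q hD σ H w hsupp hper
end
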